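/- arXiv:2504.01486 — 2 statements merged into one kernel-verified Lean document; each statement's English description precedes it below -/
import Mathlib

section
/- Let y and z be the outputs of Algorithms FeasibleGAP and ImitativeGAP with sample size t = ⌊n/2⌋, where the permutation π of [n] is uniform at random and, conditionally on π, the bin choices R_{t+1},…,R_n are independent with P(R_ℓ = i) = x̃_{i,π(ℓ)}(Q_ℓ) for i ∈ [m] and P(R_ℓ = 0) = 1 − Σ_{i=1}^m x̃_{i,π(ℓ)}(Q_ℓ). Then (1/2)·E[v(y) + v(z)] ≥ ((1 − ln 2)/2) · v(x*), where x* is an optimal integral feasible assignment; hence the algorithm RandomGAP, which runs FeasibleGAP with probability 1/2 and ImitativeGAP with probability 1/2, always outputs a feasible integral assignment of expected value at least ((1 − ln 2)/2) · v(x*) ≈ v(x*)/6.52. -/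
/-!
Both algorithms are measured against the `gain` of each round: offering item `π(ℓ)` to bin `i`
credits `v_{i,π(ℓ)} (1 - T_ℓ(i) / C_i)`, where `T_ℓ(i)` is the size offered to bin `i` before.
Pathwise the gains add up to at most `v(y) + v(z)`: an offered item either fits into `y`, or is
the first overflow of its bin and goes to `z`, or its bin has overflowed already and the gain is
nonpositive. Given `π`, the bin choices are independent, so `E[gain_ℓ]` is
`∑_i p_ℓ(i) v_i - ∑_{k<ℓ} ∑_i p_ℓ(i) p_k(i) s_i v_i / C_i`. In a uniformly random order `π(k)` is
uniform in `Q_{k+1}` even given `Q_{k+1}` and `π(k+1), …, π(n)`; this makes the first sum at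
least `v(x*)/n` and the term of round `k` at most `1/(k+1)` times the first sum. For `t = ⌊n/2⌋`, summing
`1 - ∑_{k=t}^{ℓ-1} 1/(k+1)` over the rounds `ℓ ≥ t` gives at least `n (1 - ln 2)`.
-/

/-- The value `v(x) = Σ_i Σ_j v_{i,j} x_{i,j}` of an assignment. -/
def gapVal (m n : ℕ) (v : Fin m → Fin n → ℝ) (x : Fin m → Fin n → ℝ) : ℝ :=
  ∑ i, ∑ j, v i j * x i j

/-- `x` is a feasible fractional assignment of the items in `Q`: all entries are
nonnegative, every bin respects its capacity, every item is assigned at most once,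
and only items of `Q` are assigned. -/
def gapFeasibleOn (m n : ℕ) (C : Fin m → ℝ) (s : Fin m → Fin n → ℝ)
    (x : Fin m → Fin n → ℝ) (Q : Finset (Fin n)) : Prop :=
  (∀ i j, 0 ≤ x i j) ∧
  (∀ i, ∑ j, s i j * x i j ≤ C i) ∧
  (∀ j, ∑ i, x i j ≤ 1) ∧
  (∀ i j, j ∉ Q → x i j = 0)

/-- `x` is an integral (0/1) assignment. -/
def gapIntegral (m n : ℕ) (x : Fin m → Fin n → ℝ) : Prop :=
  ∀ i j, x i j = 0 ∨ x i j = 1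
/-- `Qset π ℓ` is the set of items revealed in the first `ℓ` rounds
(rounds are 0-indexed `0,…,n−1`). -/
def QsetG (n : ℕ) (π : Equiv.Perm (Fin n)) (ℓ : ℕ) : Finset (Fin n) :=
  (Finset.univ.filter (fun k : Fin n => (k : ℕ) < ℓ)).image π

/-- Algorithm `InfeasibleGAP`: `infAlg … ℓ` is the assignment after the first `ℓ`
rounds. Nothing is assigned during the sample rounds (0-indexed rounds `< t`); in a
later round `ℓ`, if the bin choice is `R ℓ = some i` and the total size assigned to
bin `i` so far is at most `C i`, item `π ℓ` is assigned to bin `i` (so each bin's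
capacity may be exceeded by at most one item). -/
noncomputable def infAlg (m n : ℕ) (C : Fin m → ℝ) (s : Fin m → Fin n → ℝ)
    (t : ℕ) (π : Equiv.Perm (Fin n)) (R : Fin n → Option (Fin m)) :
    ℕ → Fin m → Fin n → ℝ
  | 0 => fun _ _ => 0
  | (ℓ + 1) =>
      let X := infAlg m n C s t π R ℓ
      if h : t ≤ ℓ ∧ ℓ < n then
        (R ⟨ℓ, h.2⟩).elim X (fun i =>
          if ∑ j, s i j * X i j ≤ C i then
            (fun i' j' => if i' = i ∧ j' = π ⟨ℓ, h.2⟩ then 1 else X i' j')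
          else X)
      else X

/-- Algorithms `FeasibleGAP` and `ImitativeGAP`, run together: `fzAlg … ℓ = (y, z)`
after the first `ℓ` rounds. `FeasibleGAP` assigns item `π ℓ` to bin `i = R ℓ` only if
the capacity is respected *after* the assignment; `ImitativeGAP` maintains the same
imitative assignment `y` and assigns to each bin `i` only the first item whose
tentative assignment to `i` would violate the capacity in `y`. -/
noncomputable def fzAlg (m n : ℕ) (C : Fin m → ℝ) (s : Fin m → Fin n → ℝ)
    (t : ℕ) (π : Equiv.Perm (Fin n)) (R : Fin n → Option (Fin m)) :
    ℕ → ((Fin m → Fin n → ℝ) × (Fin m → Fin n → ℝ))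
  | 0 => (fun _ _ => 0, fun _ _ => 0)
  | (ℓ + 1) =>
      let YZ := fzAlg m n C s t π R ℓ
      if h : t ≤ ℓ ∧ ℓ < n then
        (R ⟨ℓ, h.2⟩).elim YZ (fun i =>
          if s i (π ⟨ℓ, h.2⟩) + ∑ j, s i j * YZ.1 i j ≤ C i then
            ((fun i' j' => if i' = i ∧ j' = π ⟨ℓ, h.2⟩ then 1 else YZ.1 i' j'), YZ.2)
          else if ∀ k ∈ Finset.univ.filter (fun k : Fin n => (k : ℕ) < ℓ),
              YZ.2 i (π k) = 0 then
            (YZ.1, (fun i' j' => if i' = i ∧ j' = π ⟨ℓ, h.2⟩ then 1 else YZ.2 i' j'))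
          else YZ)
      else YZ

/-- The probability weight of a vector of bin choices `R` given the permutation `π`:
in each round `ℓ` after the sample (0-indexed `ℓ ≥ t`), independently,
`P(R ℓ = some i) = x̃_{i,π(ℓ)}(Q_ℓ)` and `P(R ℓ = none) = 1 − Σ_i x̃_{i,π(ℓ)}(Q_ℓ)`;
during the sample rounds the choice is irrelevant and forced to `none`. -/
noncomputable def binWeight (m n : ℕ) (xt : Finset (Fin n) → Fin m → Fin n → ℝ)
    (t : ℕ) (π : Equiv.Perm (Fin n)) (R : Fin n → Option (Fin m)) : ℝ :=
  ∏ ℓ : Fin n,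
    if (ℓ : ℕ) < t then (if R ℓ = none then 1 else 0)
    else
      (R ℓ).elim (1 - ∑ i, xt (QsetG n π ((ℓ : ℕ) + 1)) i (π ℓ))
        (fun i => xt (QsetG n π ((ℓ : ℕ) + 1)) i (π ℓ))

namespace GAP

open Finset Equiv

section Harmonic

theorem sum_Ico_inv_le_log_sub {a b : ℕ} (ha : 0 < a) (hab : a ≤ b) :
    ∑ k ∈ Ico a b, ((k : ℝ) + 1)⁻¹ ≤ Real.log b - Real.log a := by
  induction b, hab using Nat.le_induction with
  | base => simp
  | succ b hab ih =>
    have hb : (0 : ℝ) < b := by exact_mod_cast ha.trans_le hab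
    have hstep := Real.one_sub_inv_le_log_of_pos (x := (b + 1) / b) (by positivity)
    rw [Real.log_div (by positivity) hb.ne', inv_div, one_sub_div (by positivity)] at hstep
    rw [sum_Ico_succ_top hab]
    push_cast
    linarith [show ((b : ℝ) + 1 - b) / (b + 1) = ((b : ℝ) + 1)⁻¹ by ring]

theorem sum_Ico_inv_le_log_two {t ℓ : ℕ} (hℓ : ℓ ≤ 2 * t) :
    ∑ k ∈ Ico t ℓ, ((k : ℝ) + 1)⁻¹ ≤ Real.log 2 := by
  rcases le_or_gt ℓ t with h | h
  · simp [Ico_eq_empty_of_le h, Real.log_nonneg one_le_two]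
  · have ht : 0 < t := by omega
    calc _ ≤ Real.log ℓ - Real.log t := sum_Ico_inv_le_log_sub ht h.le
      _ ≤ Real.log (2 * t) - Real.log t := by
        gcongr
        · exact_mod_cast ht.trans h
        · exact_mod_cast hℓ
      _ = Real.log 2 := by rw [Real.log_mul two_ne_zero (by positivity)]; ring

theorem sum_Ico_sum_Ico_inv {t n : ℕ} (h : t ≤ n) :
    ∑ ℓ ∈ Ico t n, ∑ k ∈ Ico t ℓ, ((k : ℝ) + 1)⁻¹
      = n * ∑ k ∈ Ico t n, ((k : ℝ) + 1)⁻¹ - (n - t) := by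
  induction n, h using Nat.le_induction with
  | base => simp
  | succ n h ih =>
    rw [sum_Ico_succ_top h, ih, sum_Ico_succ_top h]
    push_cast
    field_simp
    ring

theorem mul_one_sub_log_two_le_sum (n : ℕ) :
    n * (1 - Real.log 2) ≤ ∑ ℓ ∈ Ico (n / 2) n, (1 - ∑ k ∈ Ico (n / 2) ℓ, ((k : ℝ) + 1)⁻¹) := by
  set t := n / 2
  have htn : t ≤ n := Nat.div_le_self n 2
  have h2t : 2 * t ≤ n := Nat.mul_div_le n 2
  -- only the term `k = n - 1` of odd `n` lies beyond `2t`, and it is `1 / n`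
  have htail : ∑ k ∈ Ico (2 * t) n, (n : ℝ) * ((k : ℝ) + 1)⁻¹ ≤ (n - 2 * t : ℕ) := by
    calc ∑ k ∈ Ico (2 * t) n, (n : ℝ) * ((k : ℝ) + 1)⁻¹ ≤ ∑ k ∈ Ico (2 * t) n, (1 : ℝ) := by
          refine sum_le_sum fun k hk => ?_
          have hk : (n : ℝ) ≤ k + 1 := by exact_mod_cast (by simp at hk; omega : n ≤ k + 1)
          rw [← div_eq_mul_inv, div_le_one (by positivity)]
          exact hk
      _ = (n - 2 * t : ℕ) := by simp
  have hH : (n : ℝ) * ∑ k ∈ Ico t n, ((k : ℝ) + 1)⁻¹ ≤ n * Real.log 2 + (n - 2 * t : ℕ) := by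
    rw [← sum_Ico_consecutive _ (by omega : t ≤ 2 * t) h2t, mul_add, mul_sum (Ico (2 * t) n)]
    gcongr
    exact sum_Ico_inv_le_log_two le_rfl
  rw [sum_sub_distrib, sum_const, Nat.card_Ico, sum_Ico_sum_Ico_inv htn, nsmul_one]
  push_cast [Nat.cast_sub htn, Nat.cast_sub h2t] at hH ⊢
  linarith

end Harmonic

section Products

theorem sum_prod_mul_prod_ite_eq {ι α M : Type*} [Fintype ι] [DecidableEq ι] [Fintype α]
    [DecidableEq α] [CommSemiring M] (w : ι → α → M) (hw : ∀ c, ∑ o, w c o = 1)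
    (S : Finset ι) (o : α) :
    ∑ R : ι → α, (∏ c, w c (R c)) * ∏ c ∈ S, (if R c = o then 1 else 0) = ∏ c ∈ S, w c o := by
  have hsplit : ∀ R : ι → α, (∏ c, w c (R c)) * ∏ c ∈ S, (if R c = o then (1 : M) else 0)
      = ∏ c, w c (R c) * (if c ∈ S then (if R c = o then 1 else 0) else 1) := by
    intro R
    rw [prod_mul_distrib, prod_ite_mem, univ_inter]
  simp_rw [hsplit]
  rw [← Fintype.prod_sum (fun c x => w c x * (if c ∈ S then (if x = o then 1 else 0) else 1))]
  conv_rhs => rw [← univ_inter S, ← prod_ite_mem]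
  refine prod_congr rfl fun c _ => ?_
  split_ifs <;> simp [hw]

end Products

section Permutations

theorem sum_perm_mul_swap_apply {α M : Type*} [Fintype α] [DecidableEq α] [AddCommMonoid M]
    (F : Perm α → α → M) (r k : α) :
    ∑ π : Perm α, F (π * swap r k) (π k) = ∑ π : Perm α, F π (π r) := by
  rw [← Equiv.sum_comp (Equiv.mulRight (swap r k)) (fun π => F π (π r))]
  exact sum_congr rfl fun π _ => by simp [Perm.mul_apply]

theorem card_mul_sum_perm_apply {α M : Type*} [Fintype α] [DecidableEq α] [CommSemiring M]
    (f : α → M) (r : α) :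
    (Fintype.card α : M) * ∑ π : Perm α, f (π r) = (Fintype.card α).factorial * ∑ j, f j := by
  have hr : ∀ r' : α, ∑ π : Perm α, f (π r) = ∑ π : Perm α, f (π r') :=
    fun r' => sum_perm_mul_swap_apply (fun _ => f) r' r
  calc (Fintype.card α : M) * ∑ π : Perm α, f (π r)
      = ∑ r' : α, ∑ π : Perm α, f (π r') := by
        simp only [← hr, sum_const, card_univ, nsmul_eq_mul]
    _ = ∑ π : Perm α, ∑ j, f j := by
        rw [sum_comm]
        exact sum_congr rfl fun π _ => Equiv.sum_comp π f
    _ = _ := by rw [sum_const, card_univ, Fintype.card_perm, nsmul_eq_mul]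

theorem mem_QsetG {n : ℕ} {π : Perm (Fin n)} {L : ℕ} {j : Fin n} :
    j ∈ QsetG n π L ↔ ((π.symm j : Fin n) : ℕ) < L := by
  simp only [QsetG, mem_image, mem_filter, mem_univ, true_and]
  constructor
  · rintro ⟨k, hk, rfl⟩
    simpa using hk
  · exact fun hj => ⟨π.symm j, hj, π.apply_symm_apply j⟩

theorem QsetG_mul_swap {n : ℕ} (π : Perm (Fin n)) {a b : Fin n} {L : ℕ} (ha : (a : ℕ) < L)
    (hb : (b : ℕ) < L) : QsetG n (π * swap a b) L = QsetG n π L := by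
  ext j
  simp only [mem_QsetG, Perm.mul_def, symm_trans_apply, symm_swap, swap_apply_def]
  split_ifs with h1 h2
  · rw [h1]; omega
  · rw [h2]; omega
  · rfl

theorem succ_mul_sum_perm_apply {n : ℕ} {M : Type*} [Semiring M] (k : Fin n)
    (F : Perm (Fin n) → Fin n → M) (hF : ∀ π (r : Fin n), r ≤ k → F (π * swap r k) = F π) :
    ((k : M) + 1) * ∑ π, F π (π k) = ∑ π, ∑ j ∈ QsetG n π (k + 1), F π j := by
  have hr : ∀ r ∈ univ.filter (fun r : Fin n => (r : ℕ) < k + 1),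
      ∑ π, F π (π r) = ∑ π, F π (π k) := by
    intro r hr
    have hrk : r ≤ k := Fin.le_def.mpr (by simpa [Nat.lt_succ_iff] using hr)
    rw [← sum_perm_mul_swap_apply F r k]
    exact sum_congr rfl fun π _ => by rw [hF π r hrk]
  symm
  calc ∑ π, ∑ j ∈ QsetG n π (k + 1), F π j
      = ∑ π, ∑ r ∈ univ.filter (fun r : Fin n => (r : ℕ) < k + 1), F π (π r) :=
        sum_congr rfl fun π _ => sum_image fun _ _ _ _ h => π.injective h
    _ = ((k : M) + 1) * ∑ π, F π (π k) := by
        rw [sum_comm, sum_congr rfl hr, sum_const, Fin.card_filter_val_lt,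
          min_eq_right (by omega), nsmul_eq_mul]
        push_cast
        rfl

end Permutations

section Indices

theorem sum_range_ite_le {M : Type*} [AddCommMonoid M] (f : ℕ → M) (t ℓ : ℕ) :
    ∑ k ∈ range ℓ, (if t ≤ k then f k else 0) = ∑ k ∈ Ico t ℓ, f k := by
  rw [← sum_filter]
  congr 1
  ext k
  simp only [mem_filter, mem_range, mem_Ico]
  omega

theorem sum_filter_val_lt {n : ℕ} {M : Type*} [AddCommMonoid M] (f : ℕ → M) {ℓ : ℕ} (hℓ : ℓ ≤ n) :
    ∑ k ∈ univ.filter (fun k : Fin n => (k : ℕ) < ℓ), f k = ∑ k ∈ range ℓ, f k := by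
  rw [sum_filter, Fin.sum_univ_eq_sum_range (fun k => if k < ℓ then f k else 0), ← sum_filter]
  congr 1
  ext k
  simp only [mem_filter, mem_range]
  omega

end Indices

variable {m n : ℕ}

section Assignments

theorem sum_mul_le_of_subsingleton_support {ι : Type*} [Fintype ι] {w e : ι → ℝ} {c : ℝ}
    (hc : 0 ≤ c) (hw : ∀ i, w i ≤ c) (he : ∀ i, e i = 0 ∨ e i = 1)
    (huniq : ∀ i i', e i ≠ 0 → e i' ≠ 0 → i = i') : ∑ i, w i * e i ≤ c := by
  by_cases hex : ∃ i, e i ≠ 0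
  · obtain ⟨i₀, hi₀⟩ := hex
    rw [sum_eq_single i₀ (fun i _ hi => by
      by_contra hne
      exact hi (huniq i i₀ (right_ne_zero_of_mul hne) hi₀)) (by simp)]
    rcases he i₀ with h | h <;> simp [h, hc, hw]
  · push Not at hex
    simp [hex, hc]

theorem nonneg_of_gapIntegral {x : Fin m → Fin n → ℝ} (hx : gapIntegral m n x) (i : Fin m)
    (j : Fin n) : 0 ≤ x i j := by
  rcases hx i j with h | h <;> simp [h]

theorem gapVal_eq_sum_of_vanishing (v : Fin m → Fin n → ℝ) {x : Fin m → Fin n → ℝ}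
    {Q : Finset (Fin n)} (hx : ∀ i j, j ∉ Q → x i j = 0) :
    gapVal m n v x = ∑ j ∈ Q, ∑ i, v i j * x i j := by
  rw [gapVal, sum_comm, ← sum_subset (subset_univ Q)]
  intro j _ hj
  exact sum_eq_zero fun i _ => by rw [hx i j hj, mul_zero]

theorem gapFeasibleOn_restrict {C : Fin m → ℝ} {s x : Fin m → Fin n → ℝ}
    (hs : ∀ i j, 0 ≤ s i j) (hx : gapFeasibleOn m n C s x univ) (Q : Finset (Fin n)) :
    gapFeasibleOn m n C s (fun i j => if j ∈ Q then x i j else 0) Q := by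
  obtain ⟨hx0, hcap, hcol, -⟩ := hx
  refine ⟨fun i j => ?_, fun i => (sum_le_sum fun j _ => ?_).trans (hcap i), fun j => ?_,
    fun i j hj => if_neg hj⟩
  · dsimp only
    split_ifs
    exacts [hx0 i j, le_rfl]
  · dsimp only
    split_ifs
    exacts [le_rfl, by rw [mul_zero]; exact mul_nonneg (hs i j) (hx0 i j)]
  · dsimp only
    split_ifs
    exacts [hcol j, by simp]

def setOne (X : Fin m → Fin n → ℝ) (i : Fin m) (j : Fin n) : Fin m → Fin n → ℝ :=
  fun i' j' => if i' = i ∧ j' = j then 1 else X i' j'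

section setOne

variable {X : Fin m → Fin n → ℝ} {i : Fin m} {j : Fin n}

theorem gapIntegral_setOne (hX : gapIntegral m n X) (i : Fin m) (j : Fin n) :
    gapIntegral m n (setOne X i j) := fun i' j' => by
  unfold GAP.setOne
  split_ifs
  exacts [Or.inr rfl, hX i' j']

theorem eq_or_ne_zero_of_setOne_ne_zero {i' : Fin m} {j' : Fin n} (h : setOne X i j i' j' ≠ 0) :
    (i' = i ∧ j' = j) ∨ X i' j' ≠ 0 := by
  unfold setOne at h
  split_ifs at h with hij
  exacts [Or.inl hij, Or.inr h]

theorem sum_mul_setOne (w : Fin m → Fin n → ℝ) (hX : X i j = 0) (i' : Fin m) :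
    ∑ j', w i' j' * setOne X i j i' j' = ∑ j', w i' j' * X i' j' + if i' = i then w i j else 0 := by
  have hsplit : ∀ j', setOne X i j i' j' = X i' j' + if i' = i ∧ j' = j then 1 else 0 := by
    intro j'
    unfold setOne
    split_ifs with h
    · rw [h.1, h.2, hX, zero_add]
    · rw [add_zero]
  simp_rw [hsplit, mul_add, sum_add_distrib, mul_ite, mul_one, mul_zero]
  congr 1
  by_cases hi : i' = i
  · subst hi
    simp
  · simp [hi]

theorem gapVal_setOne (v : Fin m → Fin n → ℝ) (hX : X i j = 0) :
    gapVal m n v (setOne X i j) = gapVal m n v X + v i j := by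
  simp_rw [gapVal, sum_mul_setOne v hX, sum_add_distrib, sum_ite_eq', mem_univ, if_true]

end setOne

end Assignments

section Algorithm

variable (C : Fin m → ℝ) (s v : Fin m → Fin n → ℝ) (t : ℕ) (π : Perm (Fin n))
  (R : Fin n → Option (Fin m))

def offeredLoad (ℓ : ℕ) (i : Fin m) : ℝ :=
  ∑ k ∈ univ.filter (fun k : Fin n => (k : ℕ) < ℓ), if R k = some i then s i (π k) else 0

noncomputable def gain (ℓ : ℕ) : ℝ :=
  if h : t ≤ ℓ ∧ ℓ < n then
    (R ⟨ℓ, h.2⟩).elim 0 fun i => v i (π ⟨ℓ, h.2⟩) * (1 - offeredLoad s π R ℓ i / C i)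
  else 0

def SupportedBefore (ℓ : ℕ) (X : Fin m → Fin n → ℝ) : Prop :=
  ∀ i j, X i j ≠ 0 → ((π.symm j : Fin n) : ℕ) < ℓ ∧ R (π.symm j) = some i

/-- `Y` and `Z` are the assignments of FeasibleGAP and ImitativeGAP after `ℓ` rounds. An item of
`Z` in bin `i` certifies that the load offered to `i` exceeds `C i`, so that later offers to `i`
have nonpositive gain. -/
structure Invariant (ℓ : ℕ) (Y Z : Fin m → Fin n → ℝ) : Prop where
  integral_fst : gapIntegral m n Y
  integral_snd : gapIntegral m n Z
  supported_fst : SupportedBefore π R ℓ Y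
  supported_snd : SupportedBefore π R ℓ Z
  load_le_capacity : ∀ i, ∑ j, s i j * Y i j ≤ C i
  load_le_offeredLoad : ∀ i, ∑ j, s i j * Y i j ≤ offeredLoad s π R ℓ i
  capacity_lt_of_snd_ne_zero : ∀ i j, Z i j ≠ 0 → C i < offeredLoad s π R ℓ i
  eq_of_snd_ne_zero : ∀ i j j', Z i j ≠ 0 → Z i j' ≠ 0 → j = j'
  sum_gain_le : ∑ k ∈ range ℓ, gain C s v t π R k ≤ gapVal m n v Y + gapVal m n v Z

variable {C s v t π R}

theorem offeredLoad_nonneg (hs : ∀ i j, 0 ≤ s i j) (ℓ : ℕ) (i : Fin m) :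
    0 ≤ offeredLoad s π R ℓ i :=
  sum_nonneg fun k _ => by split_ifs; exacts [hs _ _, le_rfl]

theorem offeredLoad_mono (hs : ∀ i j, 0 ≤ s i j) {ℓ ℓ' : ℕ} (h : ℓ ≤ ℓ') (i : Fin m) :
    offeredLoad s π R ℓ i ≤ offeredLoad s π R ℓ' i := by
  refine sum_le_sum_of_subset_of_nonneg (fun k hk => ?_) fun k _ _ => ?_
  · simp only [mem_filter, mem_univ, true_and] at hk ⊢
    omega
  · split_ifs
    exacts [hs _ _, le_rfl]

theorem offeredLoad_succ {ℓ : ℕ} (hℓ : ℓ < n) {i : Fin m} (hR : R ⟨ℓ, hℓ⟩ = some i) :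
    offeredLoad s π R (ℓ + 1) i = offeredLoad s π R ℓ i + s i (π ⟨ℓ, hℓ⟩) := by
  have hfilter : univ.filter (fun k : Fin n => (k : ℕ) < ℓ + 1)
      = insert ⟨ℓ, hℓ⟩ (univ.filter fun k : Fin n => (k : ℕ) < ℓ) := by
    ext k
    simp only [mem_filter, mem_univ, true_and, mem_insert, Fin.ext_iff]
    omega
  rw [offeredLoad, hfilter, sum_insert (by simp), hR, if_pos rfl, add_comm]
  rfl

theorem gain_of_not_active {ℓ : ℕ} (h : ¬(t ≤ ℓ ∧ ℓ < n)) : gain C s v t π R ℓ = 0 :=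
  dif_neg h

theorem gain_of_none {ℓ : ℕ} (h : t ≤ ℓ ∧ ℓ < n) (hR : R ⟨ℓ, h.2⟩ = none) :
    gain C s v t π R ℓ = 0 := by
  rw [gain, dif_pos h, hR]
  rfl

theorem gain_of_some {ℓ : ℕ} (h : t ≤ ℓ ∧ ℓ < n) {i : Fin m} (hR : R ⟨ℓ, h.2⟩ = some i) :
    gain C s v t π R ℓ = v i (π ⟨ℓ, h.2⟩) * (1 - offeredLoad s π R ℓ i / C i) := by
  rw [gain, dif_pos h, hR]
  rfl

theorem gain_le_of_some (hC : ∀ i, 0 < C i) (hs : ∀ i j, 0 ≤ s i j) (hv : ∀ i j, 0 ≤ v i j)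
    {ℓ : ℕ} (h : t ≤ ℓ ∧ ℓ < n) {i : Fin m} (hR : R ⟨ℓ, h.2⟩ = some i) :
    gain C s v t π R ℓ ≤ v i (π ⟨ℓ, h.2⟩) := by
  rw [gain_of_some h hR]
  have := div_nonneg (offeredLoad_nonneg (π := π) (R := R) hs ℓ i) (hC i).le
  nlinarith [hv i (π ⟨ℓ, h.2⟩)]

theorem gain_nonpos_of_lt (hC : ∀ i, 0 < C i) (hv : ∀ i j, 0 ≤ v i j) {ℓ : ℕ}
    (h : t ≤ ℓ ∧ ℓ < n) {i : Fin m} (hR : R ⟨ℓ, h.2⟩ = some i)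
    (hlt : C i < offeredLoad s π R ℓ i) : gain C s v t π R ℓ ≤ 0 := by
  rw [gain_of_some h hR]
  have : 1 < offeredLoad s π R ℓ i / C i := (one_lt_div (hC i)).mpr hlt
  nlinarith [hv i (π ⟨ℓ, h.2⟩)]

namespace SupportedBefore

variable {ℓ : ℕ} {X : Fin m → Fin n → ℝ}

theorem mono (hX : SupportedBefore π R ℓ X) : SupportedBefore π R (ℓ + 1) X :=
  fun i j h => ⟨Nat.lt_succ_of_lt (hX i j h).1, (hX i j h).2⟩

theorem apply_eq_zero (hX : SupportedBefore π R ℓ X) (hℓ : ℓ < n) (i : Fin m) :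
    X i (π ⟨ℓ, hℓ⟩) = 0 := by
  by_contra h
  simpa using (hX i _ h).1

theorem setOne (hX : SupportedBefore π R ℓ X) (hℓ : ℓ < n) {i : Fin m}
    (hR : R ⟨ℓ, hℓ⟩ = some i) : SupportedBefore π R (ℓ + 1) (setOne X i (π ⟨ℓ, hℓ⟩)) := by
  intro i' j h
  rcases eq_or_ne_zero_of_setOne_ne_zero h with ⟨rfl, rfl⟩ | h
  · simpa using hR
  · exact hX.mono i' j h

theorem sum_le_one (hX : SupportedBefore π R ℓ X) (hX01 : gapIntegral m n X) (j : Fin n) :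
    ∑ i, X i j ≤ 1 := by
  simpa using sum_mul_le_of_subsingleton_support (w := fun _ => (1 : ℝ)) zero_le_one
    (fun _ => le_rfl) (fun i => hX01 i j) fun i i' hi hi' =>
      Option.some_injective _ ((hX i j hi).2.symm.trans (hX i' j hi').2)

end SupportedBefore

namespace Invariant

variable {ℓ : ℕ} {Y Z : Fin m → Fin n → ℝ}

theorem succ_of_gain_nonpos (hI : Invariant C s v t π R ℓ Y Z) (hs : ∀ i j, 0 ≤ s i j)
    (hg : gain C s v t π R ℓ ≤ 0) : Invariant C s v t π R (ℓ + 1) Y Z where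
  __ := hI
  supported_fst := hI.supported_fst.mono
  supported_snd := hI.supported_snd.mono
  load_le_offeredLoad i :=
    (hI.load_le_offeredLoad i).trans (offeredLoad_mono hs (Nat.le_succ ℓ) i)
  capacity_lt_of_snd_ne_zero i j h :=
    (hI.capacity_lt_of_snd_ne_zero i j h).trans_le (offeredLoad_mono hs (Nat.le_succ ℓ) i)
  sum_gain_le := by
    rw [sum_range_succ]
    linarith [hI.sum_gain_le]

theorem succ_setOne_fst (hI : Invariant C s v t π R ℓ Y Z) (hC : ∀ i, 0 < C i)
    (hs : ∀ i j, 0 ≤ s i j) (hv : ∀ i j, 0 ≤ v i j) (h : t ≤ ℓ ∧ ℓ < n) {i : Fin m}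
    (hR : R ⟨ℓ, h.2⟩ = some i) (hfit : s i (π ⟨ℓ, h.2⟩) + ∑ j, s i j * Y i j ≤ C i) :
    Invariant C s v t π R (ℓ + 1) (setOne Y i (π ⟨ℓ, h.2⟩)) Z := by
  have hY := hI.supported_fst.apply_eq_zero h.2 i
  have hmono := fun i' => offeredLoad_mono (π := π) (R := R) hs (Nat.le_succ ℓ) i'
  refine ⟨gapIntegral_setOne hI.integral_fst _ _, hI.integral_snd, hI.supported_fst.setOne h.2 hR,
    hI.supported_snd.mono, fun i' => ?_, fun i' => ?_,
    fun i' j h' => (hI.capacity_lt_of_snd_ne_zero i' j h').trans_le (hmono i'),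
    hI.eq_of_snd_ne_zero, ?_⟩
  · rw [sum_mul_setOne s hY]
    split_ifs with hi
    · subst hi
      linarith
    · simpa using hI.load_le_capacity i'
  · rw [sum_mul_setOne s hY]
    split_ifs with hi
    · subst hi
      rw [offeredLoad_succ h.2 hR]
      linarith [hI.load_le_offeredLoad i']
    · simpa using (hI.load_le_offeredLoad i').trans (hmono i')
  · rw [sum_range_succ, gapVal_setOne v hY]
    linarith [hI.sum_gain_le, gain_le_of_some (π := π) hC hs hv h hR]

theorem succ_setOne_snd (hI : Invariant C s v t π R ℓ Y Z) (hC : ∀ i, 0 < C i)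
    (hs : ∀ i j, 0 ≤ s i j) (hv : ∀ i j, 0 ≤ v i j) (h : t ≤ ℓ ∧ ℓ < n) {i : Fin m}
    (hR : R ⟨ℓ, h.2⟩ = some i) (hover : C i < s i (π ⟨ℓ, h.2⟩) + ∑ j, s i j * Y i j)
    (hfree : ∀ k ∈ univ.filter (fun k : Fin n => (k : ℕ) < ℓ), Z i (π k) = 0) :
    Invariant C s v t π R (ℓ + 1) Y (setOne Z i (π ⟨ℓ, h.2⟩)) := by
  have hZ := hI.supported_snd.apply_eq_zero h.2 i
  have hrow : ∀ j, Z i j = 0 := fun j => by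
    by_contra hj
    exact hj (by simpa using hfree (π.symm j) (by simpa using (hI.supported_snd i j hj).1))
  have hmono := fun i' => offeredLoad_mono (π := π) (R := R) hs (Nat.le_succ ℓ) i'
  refine ⟨hI.integral_fst, gapIntegral_setOne hI.integral_snd _ _, hI.supported_fst.mono,
    hI.supported_snd.setOne h.2 hR, hI.load_le_capacity,
    fun i' => (hI.load_le_offeredLoad i').trans (hmono i'), fun i' j hj => ?_,
    fun i' j j' hj hj' => ?_, ?_⟩
  · rcases eq_or_ne_zero_of_setOne_ne_zero hj with ⟨rfl, rfl⟩ | hj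
    · rw [offeredLoad_succ h.2 hR]
      linarith [hI.load_le_offeredLoad i']
    · exact (hI.capacity_lt_of_snd_ne_zero i' j hj).trans_le (hmono i')
  · rcases eq_or_ne_zero_of_setOne_ne_zero hj with ⟨rfl, rfl⟩ | hj <;>
      rcases eq_or_ne_zero_of_setOne_ne_zero hj' with ⟨hi, rfl⟩ | hj'
    · rfl
    · exact absurd (hrow j') hj'
    · exact absurd (hrow j) (hi ▸ hj)
    · exact hI.eq_of_snd_ne_zero i' j j' hj hj'
  · rw [sum_range_succ, gapVal_setOne v hZ]
    linarith [hI.sum_gain_le, gain_le_of_some (π := π) hC hs hv h hR]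

theorem feasible (hI : Invariant C s v t π R ℓ Y Z) (hC : ∀ i, 0 < C i)
    (hsC : ∀ i j, s i j ≤ C i) :
    gapFeasibleOn m n C s Y univ ∧ gapIntegral m n Y ∧
      gapFeasibleOn m n C s Z univ ∧ gapIntegral m n Z := by
  refine ⟨⟨nonneg_of_gapIntegral hI.integral_fst, hI.load_le_capacity,
      hI.supported_fst.sum_le_one hI.integral_fst, fun _ j hj => absurd (mem_univ j) hj⟩,
    hI.integral_fst, ⟨nonneg_of_gapIntegral hI.integral_snd, fun i => ?_,
      hI.supported_snd.sum_le_one hI.integral_snd, fun _ j hj => absurd (mem_univ j) hj⟩,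
    hI.integral_snd⟩
  exact sum_mul_le_of_subsingleton_support (hC i).le (hsC i) (hI.integral_snd i)
    (hI.eq_of_snd_ne_zero i)

end Invariant

end Algorithm

section Run

variable {C : Fin m → ℝ} {s v : Fin m → Fin n → ℝ} {t : ℕ} {π : Perm (Fin n)}
  {R : Fin n → Option (Fin m)} {ℓ : ℕ}

theorem fzAlg_succ_of_not_active (h : ¬(t ≤ ℓ ∧ ℓ < n)) :
    fzAlg m n C s t π R (ℓ + 1) = fzAlg m n C s t π R ℓ := by
  rw [fzAlg, dif_neg h]

theorem fzAlg_succ_of_none (h : t ≤ ℓ ∧ ℓ < n) (hR : R ⟨ℓ, h.2⟩ = none) :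
    fzAlg m n C s t π R (ℓ + 1) = fzAlg m n C s t π R ℓ := by
  rw [fzAlg, dif_pos h, hR]
  rfl

variable {i : Fin m}

theorem fzAlg_succ_of_fits (h : t ≤ ℓ ∧ ℓ < n) (hR : R ⟨ℓ, h.2⟩ = some i)
    (hfit : s i (π ⟨ℓ, h.2⟩) + ∑ j, s i j * (fzAlg m n C s t π R ℓ).1 i j ≤ C i) :
    fzAlg m n C s t π R (ℓ + 1)
      = (setOne (fzAlg m n C s t π R ℓ).1 i (π ⟨ℓ, h.2⟩), (fzAlg m n C s t π R ℓ).2) := by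
  rw [fzAlg, dif_pos h, hR]
  exact if_pos hfit

theorem fzAlg_succ_of_first_overflow (h : t ≤ ℓ ∧ ℓ < n) (hR : R ⟨ℓ, h.2⟩ = some i)
    (hfit : ¬s i (π ⟨ℓ, h.2⟩) + ∑ j, s i j * (fzAlg m n C s t π R ℓ).1 i j ≤ C i)
    (hfree : ∀ k ∈ univ.filter (fun k : Fin n => (k : ℕ) < ℓ),
      (fzAlg m n C s t π R ℓ).2 i (π k) = 0) :
    fzAlg m n C s t π R (ℓ + 1)
      = ((fzAlg m n C s t π R ℓ).1, setOne (fzAlg m n C s t π R ℓ).2 i (π ⟨ℓ, h.2⟩)) := by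
  rw [fzAlg, dif_pos h, hR]
  exact (if_neg hfit).trans (if_pos hfree)

theorem fzAlg_succ_of_overflow (h : t ≤ ℓ ∧ ℓ < n) (hR : R ⟨ℓ, h.2⟩ = some i)
    (hfit : ¬s i (π ⟨ℓ, h.2⟩) + ∑ j, s i j * (fzAlg m n C s t π R ℓ).1 i j ≤ C i)
    (hfree : ¬∀ k ∈ univ.filter (fun k : Fin n => (k : ℕ) < ℓ),
      (fzAlg m n C s t π R ℓ).2 i (π k) = 0) :
    fzAlg m n C s t π R (ℓ + 1) = fzAlg m n C s t π R ℓ := by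
  rw [fzAlg, dif_pos h, hR]
  exact (if_neg hfit).trans (if_neg hfree)

theorem invariant_fzAlg (hC : ∀ i, 0 < C i) (hs : ∀ i j, 0 ≤ s i j) (hv : ∀ i j, 0 ≤ v i j)
    (ℓ : ℕ) :
    Invariant C s v t π R ℓ (fzAlg m n C s t π R ℓ).1 (fzAlg m n C s t π R ℓ).2 := by
  induction ℓ with
  | zero =>
    refine ⟨fun _ _ => Or.inl rfl, fun _ _ => Or.inl rfl, fun _ _ h => absurd rfl h,
      fun _ _ h => absurd rfl h, fun i => ?_, fun i => ?_, fun _ _ h => absurd rfl h,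
      fun _ _ _ h => absurd rfl h, ?_⟩
    · simpa [fzAlg] using (hC i).le
    · simpa [fzAlg] using offeredLoad_nonneg hs 0 i
    · simp [fzAlg, gapVal]
  | succ ℓ ih =>
    by_cases h : t ≤ ℓ ∧ ℓ < n
    swap
    · rw [fzAlg_succ_of_not_active h]
      exact ih.succ_of_gain_nonpos hs (gain_of_not_active h).le
    cases hR : R ⟨ℓ, h.2⟩ with
    | none =>
      rw [fzAlg_succ_of_none h hR]
      exact ih.succ_of_gain_nonpos hs (gain_of_none h hR).le
    | some i =>
      by_cases hfit : s i (π ⟨ℓ, h.2⟩) + ∑ j, s i j * (fzAlg m n C s t π R ℓ).1 i j ≤ C i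
      · rw [fzAlg_succ_of_fits h hR hfit]
        exact ih.succ_setOne_fst hC hs hv h hR hfit
      by_cases hfree : ∀ k ∈ univ.filter (fun k : Fin n => (k : ℕ) < ℓ),
          (fzAlg m n C s t π R ℓ).2 i (π k) = 0
      · rw [fzAlg_succ_of_first_overflow h hR hfit hfree]
        exact ih.succ_setOne_snd hC hs hv h hR (not_le.mp hfit) hfree
      · rw [fzAlg_succ_of_overflow h hR hfit hfree]
        push Not at hfree
        obtain ⟨k, -, hk⟩ := hfree
        exact ih.succ_of_gain_nonpos hs
          (gain_nonpos_of_lt hC hv h hR (ih.capacity_lt_of_snd_ne_zero i _ hk))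

end Run

section RoundLaw

variable (xt : Finset (Fin n) → Fin m → Fin n → ℝ) (t : ℕ) (π : Perm (Fin n))

def roundLaw (ℓ : Fin n) (o : Option (Fin m)) : ℝ :=
  if (ℓ : ℕ) < t then (if o = none then 1 else 0)
  else o.elim (1 - ∑ i, xt (QsetG n π (ℓ + 1)) i (π ℓ)) fun i => xt (QsetG n π (ℓ + 1)) i (π ℓ)

theorem binWeight_eq_prod_roundLaw (R : Fin n → Option (Fin m)) :
    binWeight m n xt t π R = ∏ ℓ, roundLaw xt t π ℓ (R ℓ) :=
  rfl

variable {xt t π}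

theorem sum_roundLaw (ℓ : Fin n) : ∑ o, roundLaw xt t π ℓ o = 1 := by
  by_cases h : (ℓ : ℕ) < t <;> simp [roundLaw, h, Fintype.sum_option]

theorem roundLaw_nonneg {C : Fin m → ℝ} {s : Fin m → Fin n → ℝ}
    (hxt : ∀ Q, gapFeasibleOn m n C s (xt Q) Q) (ℓ : Fin n) (o : Option (Fin m)) :
    0 ≤ roundLaw xt t π ℓ o := by
  by_cases h : (ℓ : ℕ) < t
  · simp only [roundLaw, h, if_true]
    positivity
  · cases o with
    | none => simpa [roundLaw, h] using (hxt _).2.2.1 (π ℓ)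
    | some i => simpa [roundLaw, h] using (hxt _).1 i (π ℓ)

theorem roundLaw_some_of_lt {ℓ : Fin n} (h : (ℓ : ℕ) < t) (i : Fin m) :
    roundLaw xt t π ℓ (some i) = 0 := by
  simp [roundLaw, h]

theorem roundLaw_some_of_le {ℓ : Fin n} (h : t ≤ ℓ) (i : Fin m) :
    roundLaw xt t π ℓ (some i) = xt (QsetG n π (ℓ + 1)) i (π ℓ) := by
  simp [roundLaw, h.not_gt]

theorem roundLaw_mul_swap {a b ℓ : Fin n} (ha : a < ℓ) (hb : b < ℓ) (o : Option (Fin m)) :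
    roundLaw xt t (π * swap a b) ℓ o = roundLaw xt t π ℓ o := by
  have hQ := QsetG_mul_swap π (L := ℓ + 1) (Nat.lt_succ_of_lt ha) (Nat.lt_succ_of_lt hb)
  simp only [roundLaw, hQ, Perm.mul_apply, swap_apply_of_ne_of_ne ha.ne' hb.ne']

theorem sum_binWeight_mul_ite_eq (a : Fin n) (o : Option (Fin m)) :
    ∑ R, binWeight m n xt t π R * (if R a = o then 1 else 0) = roundLaw xt t π a o := by
  simpa [binWeight_eq_prod_roundLaw] using
    sum_prod_mul_prod_ite_eq (roundLaw xt t π) sum_roundLaw {a} o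

theorem sum_binWeight_mul_ite_eq_mul_ite_eq {a b : Fin n} (hab : a ≠ b) (o : Option (Fin m)) :
    ∑ R, binWeight m n xt t π R * ((if R a = o then 1 else 0) * (if R b = o then 1 else 0))
      = roundLaw xt t π a o * roundLaw xt t π b o := by
  simpa [binWeight_eq_prod_roundLaw, prod_pair hab] using
    sum_prod_mul_prod_ite_eq (roundLaw xt t π) sum_roundLaw {a, b} o

end RoundLaw

section Expectation

variable {C : Fin m → ℝ} {s v : Fin m → Fin n → ℝ} {t : ℕ} {π : Perm (Fin n)} {ℓ : ℕ}

theorem gain_eq_sum (R : Fin n → Option (Fin m)) (h : t ≤ ℓ ∧ ℓ < n) :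
    gain C s v t π R ℓ = ∑ i, (v i (π ⟨ℓ, h.2⟩) * (if R ⟨ℓ, h.2⟩ = some i then 1 else 0)
      - ∑ k ∈ univ.filter (fun k : Fin n => (k : ℕ) < ℓ), v i (π ⟨ℓ, h.2⟩) * (s i (π k) / C i)
          * ((if R ⟨ℓ, h.2⟩ = some i then 1 else 0) * (if R k = some i then 1 else 0))) := by
  cases hR : R ⟨ℓ, h.2⟩ with
  | none => simp [gain_of_none h hR]
  | some i₀ =>
    rw [gain_of_some h hR, sum_eq_single i₀ (fun i _ hi => by simp [Ne.symm hi]) (by simp)]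
    simp only [↓reduceIte, mul_one, one_mul]
    rw [offeredLoad, sum_div, mul_sub, mul_one, mul_sum]
    congr 1
    refine sum_congr rfl fun k _ => ?_
    split_ifs <;> ring

variable (xt : Finset (Fin n) → Fin m → Fin n → ℝ)

theorem sum_binWeight_mul_gain (h : t ≤ ℓ ∧ ℓ < n) :
    ∑ R, binWeight m n xt t π R * gain C s v t π R ℓ
      = ∑ i, (v i (π ⟨ℓ, h.2⟩) * roundLaw xt t π ⟨ℓ, h.2⟩ (some i)
        - ∑ k ∈ univ.filter (fun k : Fin n => (k : ℕ) < ℓ), v i (π ⟨ℓ, h.2⟩) * (s i (π k) / C i)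
            * (roundLaw xt t π ⟨ℓ, h.2⟩ (some i) * roundLaw xt t π k (some i))) := by
  simp_rw [gain_eq_sum _ h, mul_sum, mul_sub, mul_sum]
  rw [sum_comm]
  refine sum_congr rfl fun i _ => ?_
  rw [sum_sub_distrib, sum_comm]
  congr 1
  · simp_rw [mul_left_comm _ (v i _), ← mul_sum, sum_binWeight_mul_ite_eq]
  · refine sum_congr rfl fun k hk => ?_
    have hak : (⟨ℓ, h.2⟩ : Fin n) ≠ k := fun hak => by simp [← hak] at hk
    simp_rw [mul_left_comm _ (v i _ * _), ← mul_sum, sum_binWeight_mul_ite_eq_mul_ite_eq hak]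

end Expectation

section Averaging

variable {C : Fin m → ℝ} {s v : Fin m → Fin n → ℝ} {t : ℕ}
  {xt : Finset (Fin n) → Fin m → Fin n → ℝ}

theorem factorial_mul_gapVal_le (hs : ∀ i j, 0 ≤ s i j)
    (hxt : ∀ Q : Finset (Fin n), gapFeasibleOn m n C s (xt Q) Q ∧
      (∀ y, gapFeasibleOn m n C s y Q → gapVal m n v y ≤ gapVal m n v (xt Q)))
    {xstar : Fin m → Fin n → ℝ} (hstar : gapFeasibleOn m n C s xstar univ) {a : Fin n}
    (ha : t ≤ a) :
    (n.factorial : ℝ) * gapVal m n v xstar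
      ≤ n * ∑ π : Perm (Fin n), ∑ i, v i (π a) * roundLaw xt t π a (some i) := by
  set f : Fin n → ℝ := fun j => ∑ i, v i j * xstar i j
  have hopt : ∀ π : Perm (Fin n), ∑ j ∈ QsetG n π (a + 1), f j
      ≤ ∑ j ∈ QsetG n π (a + 1), ∑ i, v i j * xt (QsetG n π (a + 1)) i j := by
    intro π
    set Q := QsetG n π (a + 1)
    have := (hxt Q).2 _ (gapFeasibleOn_restrict hs hstar Q)
    rwa [gapVal_eq_sum_of_vanishing v (hxt Q).1.2.2.2,
      gapVal_eq_sum_of_vanishing v fun i j hj => if_neg hj,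
      sum_congr rfl fun j hj => sum_congr rfl fun i _ => by rw [if_pos hj]] at this
  have hexch := succ_mul_sum_perm_apply a (fun π j => ∑ i, v i j * xt (QsetG n π (a + 1)) i j)
    fun π r hr => by rw [QsetG_mul_swap π (Nat.lt_succ_of_le hr) (Nat.lt_succ_self a)]
  have hexch_star := succ_mul_sum_perm_apply a (fun _ => f) fun _ _ _ => rfl
  have hf : ∑ π : Perm (Fin n), f (π a)
      ≤ ∑ π : Perm (Fin n), ∑ i, v i (π a) * roundLaw xt t π a (some i) := by
    simp_rw [roundLaw_some_of_le ha]
    refine le_of_mul_le_mul_left ?_ (by positivity : (0 : ℝ) < a + 1)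
    rw [hexch_star, hexch]
    exact sum_le_sum fun π _ => hopt π
  have hcount := card_mul_sum_perm_apply f a
  rw [Fintype.card_fin] at hcount
  rw [gapVal, sum_comm, ← hcount]
  gcongr

theorem succ_mul_sum_perm_load_le (hC : ∀ i, 0 < C i) (hs : ∀ i j, 0 ≤ s i j)
    (hv : ∀ i j, 0 ≤ v i j) (hxt : ∀ Q, gapFeasibleOn m n C s (xt Q) Q) {a k : Fin n}
    (hka : k < a) (htk : t ≤ k) :
    ((k : ℝ) + 1) * ∑ π : Perm (Fin n), ∑ i, v i (π a) * (s i (π k) / C i)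
        * (roundLaw xt t π a (some i) * roundLaw xt t π k (some i))
      ≤ ∑ π : Perm (Fin n), ∑ i, v i (π a) * roundLaw xt t π a (some i) := by
  set A : Perm (Fin n) → Fin m → ℝ := fun π i => v i (π a) / C i * roundLaw xt t π a (some i)
  have hA : ∀ π i, 0 ≤ A π i := fun π i =>
    mul_nonneg (div_nonneg (hv _ _) (hC i).le) (roundLaw_nonneg hxt _ _)
  have hexch := succ_mul_sum_perm_apply k
    (fun π j => ∑ i, A π i * (xt (QsetG n π (k + 1)) i j * s i j)) fun π r hr => by
      have hra : r < a := lt_of_le_of_lt hr hka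
      simp only [A, Perm.mul_apply, swap_apply_of_ne_of_ne hra.ne' hka.ne',
        roundLaw_mul_swap hra hka, QsetG_mul_swap π (Nat.lt_succ_of_le hr) (Nat.lt_succ_self k)]
  have hload : ∀ π : Perm (Fin n), ∀ i,
      ∑ j ∈ QsetG n π (k + 1), xt (QsetG n π (k + 1)) i j * s i j ≤ C i := fun π i => by
    refine le_trans ?_ ((hxt (QsetG n π (k + 1))).2.1 i)
    simp_rw [mul_comm _ (s i _)]
    exact sum_le_sum_of_subset_of_nonneg (subset_univ _) fun j _ _ =>
      mul_nonneg (hs i j) ((hxt _).1 i j)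
  calc ((k : ℝ) + 1) * ∑ π : Perm (Fin n), ∑ i, v i (π a) * (s i (π k) / C i)
        * (roundLaw xt t π a (some i) * roundLaw xt t π k (some i))
      = ((k : ℝ) + 1) * ∑ π : Perm (Fin n), ∑ i,
          A π i * (xt (QsetG n π (k + 1)) i (π k) * s i (π k)) := by
        simp_rw [roundLaw_some_of_le htk]
        congr 1
        refine sum_congr rfl fun π _ => sum_congr rfl fun i _ => ?_
        simp only [A]
        ring
    _ = ∑ π : Perm (Fin n), ∑ i, A π i
          * ∑ j ∈ QsetG n π (k + 1), xt (QsetG n π (k + 1)) i j * s i j := by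
        rw [hexch]
        refine sum_congr rfl fun π _ => ?_
        rw [sum_comm]
        simp_rw [mul_sum]
    _ ≤ ∑ π : Perm (Fin n), ∑ i, A π i * C i :=
        sum_le_sum fun π _ => sum_le_sum fun i _ => mul_le_mul_of_nonneg_left (hload π i) (hA π i)
    _ = _ := by
        refine sum_congr rfl fun π _ => sum_congr rfl fun i _ => ?_
        simp only [A]
        field_simp [(hC i).ne']

end Averaging

section Bound

variable {C : Fin m → ℝ} {s v : Fin m → Fin n → ℝ} {t : ℕ}
  {xt : Finset (Fin n) → Fin m → Fin n → ℝ} {xstar : Fin m → Fin n → ℝ}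

theorem binWeight_nonneg (hxt : ∀ Q, gapFeasibleOn m n C s (xt Q) Q) (π : Perm (Fin n))
    (R : Fin n → Option (Fin m)) : 0 ≤ binWeight m n xt t π R :=
  prod_nonneg fun ℓ _ => roundLaw_nonneg hxt ℓ (R ℓ)

theorem sum_range_sum_gain_le (hC : ∀ i, 0 < C i) (hs : ∀ i j, 0 ≤ s i j)
    (hv : ∀ i j, 0 ≤ v i j) (hxt : ∀ Q, gapFeasibleOn m n C s (xt Q) Q) :
    ∑ ℓ ∈ range n, ∑ π : Perm (Fin n), ∑ R, binWeight m n xt t π R * gain C s v t π R ℓ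
      ≤ ∑ π : Perm (Fin n), ∑ R, binWeight m n xt t π R
          * (gapVal m n v ((fzAlg m n C s t π R n).1)
              + gapVal m n v ((fzAlg m n C s t π R n).2)) := by
  rw [sum_comm]
  refine sum_le_sum fun π _ => ?_
  rw [sum_comm]
  refine sum_le_sum fun R _ => ?_
  rw [← mul_sum]
  exact mul_le_mul_of_nonneg_left (invariant_fzAlg hC hs hv n).sum_gain_le
    (binWeight_nonneg hxt π R)

theorem mul_factorial_mul_gapVal_le_sum_gain (hC : ∀ i, 0 < C i) (hs : ∀ i j, 0 ≤ s i j)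
    (hv : ∀ i j, 0 ≤ v i j)
    (hxt : ∀ Q : Finset (Fin n), gapFeasibleOn m n C s (xt Q) Q ∧
      (∀ y, gapFeasibleOn m n C s y Q → gapVal m n v y ≤ gapVal m n v (xt Q)))
    (hstar : gapFeasibleOn m n C s xstar univ) {ℓ : ℕ} (h : t ≤ ℓ ∧ ℓ < n)
    (hH : ∑ k ∈ Ico t ℓ, ((k : ℝ) + 1)⁻¹ ≤ 1) :
    (1 - ∑ k ∈ Ico t ℓ, ((k : ℝ) + 1)⁻¹) * (n.factorial * gapVal m n v xstar)
      ≤ n * ∑ π : Perm (Fin n), ∑ R, binWeight m n xt t π R * gain C s v t π R ℓ := by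
  set a : Fin n := ⟨ℓ, h.2⟩
  set B := ∑ π : Perm (Fin n), ∑ i, v i (π a) * roundLaw xt t π a (some i)
  have hB : (n.factorial : ℝ) * gapVal m n v xstar ≤ n * B :=
    factorial_mul_gapVal_le hs hxt hstar (a := a) h.1
  have hK : ∑ k ∈ univ.filter (fun k : Fin n => (k : ℕ) < ℓ), ∑ π : Perm (Fin n), ∑ i,
        v i (π a) * (s i (π k) / C i) * (roundLaw xt t π a (some i) * roundLaw xt t π k (some i))
      ≤ (∑ k ∈ Ico t ℓ, ((k : ℝ) + 1)⁻¹) * B := by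
    rw [← sum_range_ite_le, ← sum_filter_val_lt _ h.2.le, sum_mul]
    refine sum_le_sum fun k hk => ?_
    split_ifs with htk
    · rw [le_inv_mul_iff₀ (by positivity)]
      exact succ_mul_sum_perm_load_le hC hs hv (fun Q => (hxt Q).1)
        (by simpa using hk : (k : ℕ) < ℓ) htk
    · simp [roundLaw_some_of_lt (not_le.mp htk)]
  have hE : ∑ π : Perm (Fin n), ∑ R, binWeight m n xt t π R * gain C s v t π R ℓ
      = B - ∑ k ∈ univ.filter (fun k : Fin n => (k : ℕ) < ℓ), ∑ π : Perm (Fin n), ∑ i,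
        v i (π a) * (s i (π k) / C i)
          * (roundLaw xt t π a (some i) * roundLaw xt t π k (some i)) := by
    simp_rw [sum_binWeight_mul_gain xt h, sum_sub_distrib]
    congr 1
    exact (sum_congr rfl fun π _ => sum_comm).trans sum_comm
  calc (1 - ∑ k ∈ Ico t ℓ, ((k : ℝ) + 1)⁻¹) * (n.factorial * gapVal m n v xstar)
      ≤ (1 - ∑ k ∈ Ico t ℓ, ((k : ℝ) + 1)⁻¹) * (n * B) :=
        mul_le_mul_of_nonneg_left hB (by linarith)
    _ = n * (B - (∑ k ∈ Ico t ℓ, ((k : ℝ) + 1)⁻¹) * B) := by ring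
    _ ≤ _ := by
        rw [hE]
        gcongr

theorem factorial_mul_one_sub_log_two_mul_le (hC : ∀ i, 0 < C i) (hs : ∀ i j, 0 ≤ s i j)
    (hv : ∀ i j, 0 ≤ v i j)
    (hxt : ∀ Q : Finset (Fin n), gapFeasibleOn m n C s (xt Q) Q ∧
      (∀ y, gapFeasibleOn m n C s y Q → gapVal m n v y ≤ gapVal m n v (xt Q)))
    (hstar : gapFeasibleOn m n C s xstar univ) :
    (n.factorial : ℝ) * ((1 - Real.log 2) * gapVal m n v xstar)
      ≤ ∑ π : Perm (Fin n), ∑ R : Fin n → Option (Fin m), binWeight m n xt (n / 2) π R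
          * (gapVal m n v ((fzAlg m n C s (n / 2) π R n).1)
              + gapVal m n v ((fzAlg m n C s (n / 2) π R n).2)) := by
  rcases Nat.eq_zero_or_pos n with rfl | hn
  · simp [gapVal]
  set t := n / 2
  set V := (n.factorial : ℝ) * gapVal m n v xstar
  have hV : 0 ≤ V := mul_nonneg (by positivity) (sum_nonneg fun i _ => sum_nonneg fun j _ =>
    mul_nonneg (hv i j) (hstar.1 i j))
  have hround : ∀ ℓ ∈ range n,
      (if t ≤ ℓ then (1 - ∑ k ∈ Ico t ℓ, ((k : ℝ) + 1)⁻¹) * V else 0)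
        ≤ n * ∑ π : Perm (Fin n), ∑ R, binWeight m n xt t π R * gain C s v t π R ℓ := by
    intro ℓ hℓ
    split_ifs with htℓ
    · refine mul_factorial_mul_gapVal_le_sum_gain hC hs hv hxt hstar ⟨htℓ, mem_range.mp hℓ⟩ ?_
      linarith [sum_Ico_inv_le_log_two (t := t) (ℓ := ℓ) (by simp at hℓ; omega),
        Real.log_two_lt_d9]
    · simp [gain_of_not_active fun h => htℓ h.1]
  calc (n.factorial : ℝ) * ((1 - Real.log 2) * gapVal m n v xstar)
      = (n : ℝ)⁻¹ * ((n * (1 - Real.log 2)) * V) := by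
        field_simp
        ring
    _ ≤ (n : ℝ)⁻¹ * ∑ ℓ ∈ range n,
          (if t ≤ ℓ then (1 - ∑ k ∈ Ico t ℓ, ((k : ℝ) + 1)⁻¹) * V else 0) := by
        rw [sum_range_ite_le, ← sum_mul]
        gcongr
        exact mul_one_sub_log_two_le_sum n
    _ ≤ (n : ℝ)⁻¹ * ∑ ℓ ∈ range n,
          n * ∑ π : Perm (Fin n), ∑ R, binWeight m n xt t π R * gain C s v t π R ℓ := by
        gcongr with ℓ hℓ
        exact hround ℓ hℓ
    _ = ∑ ℓ ∈ range n, ∑ π : Perm (Fin n), ∑ R,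
          binWeight m n xt t π R * gain C s v t π R ℓ := by
        rw [← mul_sum, inv_mul_cancel_left₀ (by positivity)]
    _ ≤ _ := sum_range_sum_gain_le hC hs hv fun Q => (hxt Q).1

end Bound

end GAP

/-- Let `y` and `z` be the outputs of `FeasibleGAP` and
`ImitativeGAP` with sample size `t = ⌊n/2⌋`, with `π` uniformly random and,
conditionally on `π`, independent bin choices distributed according to the optimal
fractional assignments. Then `(1/2)·E[v(y) + v(z)] ≥ ((1 − ln 2)/2) · v(x*)`;
moreover, on every realization, `y` and `z` are feasible integral assignments, so the
algorithm `RandomGAP` (which runs `FeasibleGAP` with probability `1/2` and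
`ImitativeGAP` with probability `1/2`) always outputs a feasible assignment of
expected value at least `((1 − ln 2)/2) · v(x*) ≈ v(x*)/6.52`. -/
theorem gap_randomgap_competitive
    (m n : ℕ) (C : Fin m → ℝ) (hC : ∀ i, 0 < C i)
    (s v : Fin m → Fin n → ℝ)
    (hs : ∀ i j, 0 < s i j ∧ s i j ≤ C i) (hv : ∀ i j, 0 < v i j)
    (xt : Finset (Fin n) → Fin m → Fin n → ℝ)
    (hxt : ∀ Q : Finset (Fin n), gapFeasibleOn m n C s (xt Q) Q ∧
      (∀ y, gapFeasibleOn m n C s y Q → gapVal m n v y ≤ gapVal m n v (xt Q)))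
    (xstar : Fin m → Fin n → ℝ)
    (hstar : gapFeasibleOn m n C s xstar Finset.univ ∧ gapIntegral m n xstar ∧
      (∀ y, gapFeasibleOn m n C s y Finset.univ → gapIntegral m n y →
        gapVal m n v y ≤ gapVal m n v xstar)) :
    ((1 / 2 : ℝ) * ((∑ π : Equiv.Perm (Fin n), ∑ R : Fin n → Option (Fin m),
        binWeight m n xt (n / 2) π R
          * (gapVal m n v ((fzAlg m n C s (n / 2) π R n).1)
              + gapVal m n v ((fzAlg m n C s (n / 2) π R n).2))) / (n.factorial : ℝ))
      ≥ ((1 - Real.log 2) / 2) * gapVal m n v xstar) ∧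
    (∀ (π : Equiv.Perm (Fin n)) (R : Fin n → Option (Fin m)),
      gapFeasibleOn m n C s ((fzAlg m n C s (n / 2) π R n).1) Finset.univ ∧
      gapIntegral m n ((fzAlg m n C s (n / 2) π R n).1) ∧
      gapFeasibleOn m n C s ((fzAlg m n C s (n / 2) π R n).2) Finset.univ ∧
      gapIntegral m n ((fzAlg m n C s (n / 2) π R n).2)) := by
  have hs₀ : ∀ i j, 0 ≤ s i j := fun i j => (hs i j).1.le
  have hv₀ : ∀ i j, 0 ≤ v i j := fun i j => (hv i j).le
  refine ⟨?_, fun π R => (GAP.invariant_fzAlg hC hs₀ hv₀ n).feasible hC fun i j => (hs i j).2⟩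
  have hbound := GAP.factorial_mul_one_sub_log_two_mul_le (xt := xt) hC hs₀ hv₀ hxt hstar.1
  have hexp := (le_div_iff₀' (by positivity : (0 : ℝ) < n.factorial)).mpr hbound
  rw [ge_iff_le]
  linarith
end

section
/- Every n-packing rule corresponds to an n-stopping rule with the same outcome probabilities: given n ∈ ℕ and functions p_j : ℝ_{≥0}^j → [0,1] for j ∈ [n] satisfying Σ_{j=1}^n p_j(v_1,…,v_j) ≤ 1 for every v = (v_1,…,v_n) ∈ ℝ_{≥0}^n, there exist functions r_j : ℝ_{≥0}^j → [0,1] for j ∈ [n] such that for every v ∈ ℝ_{≥0}^n and every ℓ ∈ [n], (Π_{k=1}^{ℓ−1} (1 − r_k(v_1,…,v_k))) · r_ℓ(v_1,…,v_ℓ) = p_ℓ(v_1,…,v_ℓ). -/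
section aux

variable {n : ℕ} (p : (j : Fin n) → ((Fin ((j : ℕ) + 1) → NNReal) → ℝ))

/-- partial sum of packed fractions before position `ℓ` -/
noncomputable def pkFv (v : Fin n → NNReal) (ℓ : Fin n) : ℝ :=
  ∑ k ∈ Finset.univ.filter (· < ℓ), p k (fun k' => v (Fin.castLE k.isLt k'))

/-- extend a partial vector by zeros -/
def pkExt (j : Fin n) (w : Fin ((j : ℕ) + 1) → NNReal) : Fin n → NNReal :=
  fun i => if h : (i : ℕ) < (j : ℕ) + 1 then w ⟨i, h⟩ else 0

/-- the stopping rule -/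
noncomputable def pkR (j : Fin n) (w : Fin ((j : ℕ) + 1) → NNReal) : ℝ :=
  if pkFv p (pkExt j w) j < 1 then p j w / (1 - pkFv p (pkExt j w) j) else 0

lemma pk_restrict_ext (j : Fin n) (w : Fin ((j : ℕ) + 1) → NNReal) :
    (fun k' => pkExt j w (Fin.castLE j.isLt k')) = w := by
  funext k'
  simp [pkExt, Fin.castLE, k'.isLt]

lemma pkFv_congr (v v' : Fin n → NNReal) (ℓ : Fin n)
    (h : ∀ i : Fin n, (i : ℕ) ≤ (ℓ : ℕ) → v i = v' i) :
    pkFv p v ℓ = pkFv p v' ℓ := by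
  unfold pkFv
  refine Finset.sum_congr rfl (fun k hk => ?_)
  have hkℓ : k < ℓ := (Finset.mem_filter.mp hk).2
  congr 1
  funext k'
  exact h _ (le_of_lt (lt_of_le_of_lt (Nat.lt_succ_iff.mp k'.isLt) hkℓ))

lemma pk_restrict_congr (v v' : Fin n → NNReal) (ℓ : Fin n)
    (h : ∀ i : Fin n, (i : ℕ) ≤ (ℓ : ℕ) → v i = v' i) :
    (fun k' => v (Fin.castLE ℓ.isLt k')) = (fun k' => v' (Fin.castLE ℓ.isLt k')) := by
  funext k'
  exact h _ (Nat.lt_succ_iff.mp k'.isLt)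

lemma pk_ext_agree (ℓ : Fin n) (v : Fin n → NNReal) (i : Fin n) (hi : (i : ℕ) ≤ (ℓ : ℕ)) :
    pkExt ℓ (fun k' => v (Fin.castLE ℓ.isLt k')) i = v i := by
  simp only [pkExt]
  rw [dif_pos (Nat.lt_succ_of_le hi)]
  exact congrArg v rfl

lemma pkR_eval (v : Fin n → NNReal) (ℓ : Fin n) :
    pkR p ℓ (fun k' => v (Fin.castLE ℓ.isLt k')) =
      if pkFv p v ℓ < 1 then p ℓ (fun k' => v (Fin.castLE ℓ.isLt k')) / (1 - pkFv p v ℓ)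
      else 0 := by
  unfold pkR
  rw [pkFv_congr p _ v ℓ (fun i hi => pk_ext_agree ℓ v i hi)]

end aux

/-- Every `n`-packing rule corresponds to an `n`-stopping rule with
the same outcome probabilities: given functions `p_j : ℝ_{≥0}^j → [0,1]` with
`Σ_{j=1}^n p_j(v_1,…,v_j) ≤ 1` for every `v ∈ ℝ_{≥0}^n`, there exist functions
`r_j : ℝ_{≥0}^j → [0,1]` such that for every `v` and every `ℓ ∈ [n]`,
`(Π_{k=1}^{ℓ−1} (1 − r_k(v_1,…,v_k))) · r_ℓ(v_1,…,v_ℓ) = p_ℓ(v_1,…,v_ℓ)`. -/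
theorem packing_rule_corresponds_to_stopping_rule
    (n : ℕ)
    (p : (j : Fin n) → ((Fin ((j : ℕ) + 1) → NNReal) → ℝ))
    (hp01 : ∀ (j : Fin n) (w : Fin ((j : ℕ) + 1) → NNReal), 0 ≤ p j w ∧ p j w ≤ 1)
    (hpsum : ∀ v : Fin n → NNReal,
      ∑ j : Fin n, p j (fun k => v (Fin.castLE j.isLt k)) ≤ 1) :
    ∃ r : (j : Fin n) → ((Fin ((j : ℕ) + 1) → NNReal) → ℝ),
      (∀ (j : Fin n) (w : Fin ((j : ℕ) + 1) → NNReal), 0 ≤ r j w ∧ r j w ≤ 1) ∧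
      (∀ (v : Fin n → NNReal) (ℓ : Fin n),
        (∏ k ∈ Finset.univ.filter (fun k : Fin n => k < ℓ),
            (1 - r k (fun k' => v (Fin.castLE k.isLt k'))))
          * r ℓ (fun k' => v (Fin.castLE ℓ.isLt k'))
        = p ℓ (fun k' => v (Fin.castLE ℓ.isLt k'))) := by
  -- key bound: partial sum up to and including ℓ is ≤ 1
  have hFv_nonneg : ∀ (v : Fin n → NNReal) (ℓ : Fin n), 0 ≤ pkFv p v ℓ := by
    intro v ℓ
    exact Finset.sum_nonneg (fun k _ => (hp01 k _).1)
  have key : ∀ (v : Fin n → NNReal) (ℓ : Fin n),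
      pkFv p v ℓ + p ℓ (fun k' => v (Fin.castLE ℓ.isLt k')) ≤ 1 := by
    intro v ℓ
    have hins : (Finset.univ.filter (· ≤ ℓ)) = insert ℓ (Finset.univ.filter (· < ℓ)) := by
      ext k
      simp only [Finset.mem_filter, Finset.mem_univ, true_and, Finset.mem_insert,
        Fin.lt_def, Fin.le_def, Fin.ext_iff]
      omega
    have hnot : ℓ ∉ Finset.univ.filter (· < ℓ) := by simp
    have h1 : pkFv p v ℓ + p ℓ (fun k' => v (Fin.castLE ℓ.isLt k')) =
        ∑ k ∈ Finset.univ.filter (· ≤ ℓ), p k (fun k' => v (Fin.castLE k.isLt k')) := by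
      rw [hins, Finset.sum_insert hnot, pkFv, add_comm]
    rw [h1]
    calc ∑ k ∈ Finset.univ.filter (· ≤ ℓ), p k (fun k' => v (Fin.castLE k.isLt k'))
        ≤ ∑ k : Fin n, p k (fun k' => v (Fin.castLE k.isLt k')) := by
          apply Finset.sum_le_sum_of_subset_of_nonneg (Finset.filter_subset _ _)
          intro k _ _; exact (hp01 k _).1
      _ ≤ 1 := hpsum v
  refine ⟨pkR p, ?_, ?_⟩
  · intro j w
    have hkey := key (pkExt j w) j
    rw [pk_restrict_ext] at hkey
    unfold pkR
    split_ifs with h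
    · constructor
      · exact div_nonneg (hp01 j w).1 (by linarith)
      · rw [div_le_one (by linarith)]; linarith
    · exact ⟨le_refl 0, zero_le_one⟩
  · intro v ℓ
    -- product formula
    have hF_le_one : ∀ ℓ' : Fin n, pkFv p v ℓ' ≤ 1 := by
      intro ℓ'
      have := key v ℓ'
      have := (hp01 ℓ' (fun k' => v (Fin.castLE ℓ'.isLt k'))).1
      linarith
    have prod_formula : ∀ m (hm : m < n),
        (∏ k ∈ Finset.univ.filter (fun k : Fin n => k < ⟨m, hm⟩),
            (1 - pkR p k (fun k' => v (Fin.castLE k.isLt k'))))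
          = 1 - pkFv p v ⟨m, hm⟩ := by
      intro m
      induction m with
      | zero =>
        intro hm
        have he : (Finset.univ.filter (fun k : Fin n => k < ⟨0, hm⟩)) = ∅ := by
          ext k; simp [Fin.lt_def]
        rw [he]
        simp [pkFv, he]
      | succ m ih =>
        intro hm
        have hm' : m < n := Nat.lt_of_succ_lt hm
        have hins : (Finset.univ.filter (fun k : Fin n => k < ⟨m + 1, hm⟩)) =
            insert ⟨m, hm'⟩ (Finset.univ.filter (fun k : Fin n => k < ⟨m, hm'⟩)) := by
          ext k
          simp [Finset.mem_filter, Fin.lt_def, Fin.ext_iff]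
          omega
        have hnot : (⟨m, hm'⟩ : Fin n) ∉ Finset.univ.filter (fun k : Fin n => k < ⟨m, hm'⟩) := by
          simp [Fin.lt_def]
        have hFsucc : pkFv p v ⟨m + 1, hm⟩ =
            pkFv p v ⟨m, hm'⟩ + p ⟨m, hm'⟩ (fun k' => v (Fin.castLE hm' k')) := by
          unfold pkFv
          rw [hins, Finset.sum_insert hnot, add_comm]
        rw [hins, Finset.prod_insert hnot, ih hm', pkR_eval, hFsucc]
        set F := pkFv p v ⟨m, hm'⟩ with hFdef
        set q := p ⟨m, hm'⟩ (fun k' => v (Fin.castLE hm' k')) with hqdef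
        have hq0 : 0 ≤ q := (hp01 _ _).1
        have hkey : F + q ≤ 1 := key v ⟨m, hm'⟩
        split_ifs with h
        · have h0 : 1 - F ≠ 0 := ne_of_gt (by linarith)
          field_simp
          ring
        · have hF1 : F = 1 := le_antisymm (hF_le_one _) (not_lt.mp h)
          have hq : q = 0 := by linarith
          rw [hF1, hq]
          ring
    have hprod := prod_formula ℓ.1 ℓ.isLt
    simp only [Fin.eta] at hprod
    rw [hprod, pkR_eval]
    have hq0 : 0 ≤ p ℓ (fun k' => v (Fin.castLE ℓ.isLt k')) := (hp01 _ _).1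
    have hkey := key v ℓ
    split_ifs with h
    · have h0 : 1 - pkFv p v ℓ ≠ 0 := ne_of_gt (by linarith)
      field_simp
    · have hF1 : pkFv p v ℓ = 1 := le_antisymm (hF_le_one ℓ) (not_lt.mp h)
      rw [hF1]
      have : p ℓ (fun k' => v (Fin.castLE ℓ.isLt k')) = 0 := by linarith
      rw [this]; ring
end
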